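/- Let q and p be probability distributions on a finite set Ω of cardinality n with p everywhere positive, and let δ ∈ (0, 1/e]. Define S(δ) = {z : p(z) ≤ δ} ∪ {z : q(z) ≥ δ}. Then |Σ_{z∉S(δ)} q(z)·log(q(z)/p(z))| ≤ −2n·δ·log(δ). -/
import Mathlib

lemma negmullog_mono : MonotoneOn Real.negMulLog (Set.Icc 0 (1 / Real.exp 1)) := by
  apply monotoneOn_of_deriv_nonneg (convex_Icc _ _)
    (Real.continuous_negMulLog.continuousOn)
  · rw [interior_Icc]
    exact Real.differentiableOn_negMulLog.mono (fun x hx => by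
      simp only [Set.mem_compl_iff, Set.mem_singleton_iff]
      exact ne_of_gt hx.1)
  · intro x hx
    rw [interior_Icc] at hx
    rw [Real.deriv_negMulLog (ne_of_gt hx.1)]
    have : Real.log x < -1 := by
      have := Real.log_lt_log hx.1 hx.2
      rwa [Real.log_div one_ne_zero (Real.exp_ne_zero 1), Real.log_one, Real.log_exp,
        zero_sub] at this
    linarith

lemma aux_xlogx {x δ : ℝ} (hx : 0 ≤ x) (hxδ : x ≤ δ) (hδ : δ ≤ 1 / Real.exp 1) :
    -(x * Real.log x) ≤ -(δ * Real.log δ) := by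
  have := negmullog_mono (Set.mem_Icc.2 ⟨hx, hxδ.trans hδ⟩)
    (Set.mem_Icc.2 ⟨hx.trans hxδ, hδ⟩) hxδ
  simpa [Real.negMulLog, neg_mul] using this

open Classical in
/-- The total truncation error outside `S(δ)` is at most `-2 n δ log δ`. -/
theorem stmt_6 {Ω : Type*} [Fintype Ω] (q p : Ω → ℝ)
    (hq0 : ∀ z, 0 ≤ q z) (hp0 : ∀ z, 0 < p z)
    (hq1 : ∑ z, q z = 1) (hp1 : ∑ z, p z = 1)
    (δ : ℝ) (hδ0 : 0 < δ) (hδe : δ ≤ 1 / Real.exp 1) :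
    |∑ z ∈ Finset.univ.filter (fun z => ¬(p z ≤ δ ∨ δ ≤ q z)),
        q z * Real.log (q z / p z)| ≤
      -2 * (Fintype.card Ω : ℝ) * δ * Real.log δ := by
  have hδ1 : δ < 1 := lt_of_le_of_lt hδe (by
    rw [div_lt_one (Real.exp_pos 1)]
    exact lt_of_lt_of_le (by norm_num) (Real.add_one_le_exp 1))
  have hlogδ : Real.log δ < 0 := Real.log_neg hδ0 hδ1
  have hbound : ∀ z ∈ Finset.univ.filter (fun z => ¬(p z ≤ δ ∨ δ ≤ q z)),
      |q z * Real.log (q z / p z)| ≤ -(2 * δ * Real.log δ) := by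
    intro z hz
    simp only [Finset.mem_filter, not_or, not_le] at hz
    obtain ⟨-, hpz, hqz⟩ := hz
    have hp1' : p z ≤ 1 := by
      rw [← hp1]
      exact Finset.single_le_sum (fun i _ => (hp0 i).le) (Finset.mem_univ z)
    rcases eq_or_lt_of_le (hq0 z) with h0 | h0
    · rw [← h0]
      simp
      nlinarith
    · rw [Real.log_div (ne_of_gt h0) (ne_of_gt (hp0 z)), mul_sub]
      have hlq : Real.log (q z) < 0 := Real.log_neg h0 (hqz.trans hδ1)
      have h1 : -(q z * Real.log (q z)) ≤ -(δ * Real.log δ) :=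
        aux_xlogx (hq0 z) hqz.le hδe
      have h2 : q z * (-Real.log (p z)) ≤ δ * (-Real.log δ) := by
        have hlp : -Real.log (p z) ≤ -Real.log δ := by
          have := Real.log_le_log hδ0 hpz.le
          linarith
        have hlp0 : 0 ≤ -Real.log (p z) := by
          have := Real.log_nonpos (hp0 z).le hp1'
          linarith
        exact mul_le_mul hqz.le hlp hlp0 hδ0.le
      have habs : |q z * Real.log (q z) - q z * Real.log (p z)| ≤
          -(q z * Real.log (q z)) + q z * (-Real.log (p z)) := by
        rw [abs_sub_le_iff]
        constructor <;> nlinarith [mul_nonneg (hq0 z) (neg_nonneg.2 hlq.le),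
          mul_nonpos_of_nonneg_of_nonpos (hq0 z) (Real.log_nonpos (hp0 z).le hp1')]
      calc _ ≤ -(q z * Real.log (q z)) + q z * (-Real.log (p z)) := habs
        _ ≤ -(δ * Real.log δ) + δ * (-Real.log δ) := add_le_add h1 h2
        _ = -(2 * δ * Real.log δ) := by ring
  calc |∑ z ∈ Finset.univ.filter (fun z => ¬(p z ≤ δ ∨ δ ≤ q z)),
        q z * Real.log (q z / p z)|
      ≤ ∑ z ∈ Finset.univ.filter (fun z => ¬(p z ≤ δ ∨ δ ≤ q z)),
        |q z * Real.log (q z / p z)| := Finset.abs_sum_le_sum_abs _ _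
    _ ≤ ∑ _z ∈ Finset.univ.filter (fun z => ¬(p z ≤ δ ∨ δ ≤ q z)),
        -(2 * δ * Real.log δ) := Finset.sum_le_sum hbound
    _ = ((Finset.univ.filter (fun z => ¬(p z ≤ δ ∨ δ ≤ q z))).card : ℝ) *
        -(2 * δ * Real.log δ) := by rw [Finset.sum_const, nsmul_eq_mul]
    _ ≤ (Fintype.card Ω : ℝ) * -(2 * δ * Real.log δ) := by
        apply mul_le_mul_of_nonneg_right
        · exact_mod_cast Finset.card_le_card (Finset.filter_subset _ _) |>.trans
            (le_of_eq (Finset.card_univ))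
        · nlinarith
    _ = -2 * (Fintype.card Ω : ℝ) * δ * Real.log δ := by ring
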